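/- Let $d \ge 4$, let $D \subset \mathbb{R}^d$ be a bounded measurable set, let $C > 0$, and let $G : D \times D \to [0,\infty]$ be measurable with $G(x,y) \le C\,\|x-y\|^{2-d}$ for all $x,y \in D$ with $x \neq y$. Let $\nu$ be a Lévy measure on $\mathbb{R}$ (i.e. $\nu(\{0\}) = 0$ and $\int_{\mathbb{R}}(|z|^2\wedge 1)\,\nu(dz) < \infty$) such that $\int_{\{0<|z|\le 1\}} |z|^p\,\nu(dz) < \infty$ for some $p \in \bigl(0, \tfrac{d}{d-2}\bigr)$. Then for every $x \in D$, $\int_D \int_{\mathbb{R}} \bigl( |z\,G(x,y)|^2 \wedge 1 \bigr)\,\nu(dz)\,dy < \infty$. -/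

import Mathlib

open MeasureTheory ENNReal Set

/-!
Split the `ν`-integral at `|z| = 1`. For `|z| ≤ 1` use `min (t ^ 2) 1 ≤ t ^ p`, valid because
`p < d / (d - 2) ≤ 2` when `d ≥ 4`; for `|z| > 1` bound the integrand by `1`. The inner
integral is then at most `K * G(x,y) ^ p + ν {|z| > 1}` with `K = ∫_{0<|z|≤1} |z| ^ p dν`, and
`G(x,·) ^ p ≤ C ^ p ‖x - ·‖ ^ (-(d - 2) p)` is integrable on the bounded set `D` because
`(d - 2) p < d`.
-/

open Metric Module

lemma min_sq_one_le_rpow {p : ℝ} (hp0 : 0 < p) (hp2 : p ≤ 2) (b : ℝ≥0∞) :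
    min (b ^ 2) 1 ≤ b ^ p := by
  rcases le_or_gt b 1 with hb | hb
  · calc min (b ^ 2) 1 ≤ b ^ (2 : ℝ) := by rw [rpow_two]; exact min_le_left _ _
      _ ≤ b ^ p := ENNReal.rpow_le_rpow_of_exponent_ge hb hp2
  · exact (min_le_right _ _).trans (ENNReal.one_le_rpow hb.le hp0)

lemma lintegral_min_mul_sq_one_le (ν : Measure ℝ) {p : ℝ} (hp0 : 0 < p) (hp2 : p ≤ 2)
    (b : ℝ≥0∞) :
    ∫⁻ z, min ((ENNReal.ofReal |z| * b) ^ 2) 1 ∂ν ≤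
      (∫⁻ z in {z : ℝ | 0 < |z| ∧ |z| ≤ 1}, ENNReal.ofReal (|z| ^ p) ∂ν) * b ^ p
        + ν {z | 1 < |z|} := by
  set S := {z : ℝ | 0 < |z| ∧ |z| ≤ 1}
  set T := {z : ℝ | 1 < |z|}
  have hS : MeasurableSet S :=
    (measurableSet_lt measurable_const measurable_abs).inter
      (measurableSet_le measurable_abs measurable_const)
  have hT : MeasurableSet T := measurableSet_lt measurable_const measurable_abs
  have hpt : ∀ z, min ((ENNReal.ofReal |z| * b) ^ 2) 1 ≤
      S.indicator (fun z => ENNReal.ofReal (|z| ^ p) * b ^ p) z + T.indicator 1 z := by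
    intro z
    by_cases hz1 : 1 < |z|
    · rw [indicator_of_mem (show z ∈ T from hz1)]
      exact (min_le_right _ _).trans le_add_self
    rcases eq_or_ne z 0 with rfl | hz0
    · simp
    · rw [indicator_of_mem (show z ∈ S from ⟨abs_pos.2 hz0, not_lt.1 hz1⟩)]
      refine (min_sq_one_le_rpow hp0 hp2 _).trans (le_of_eq_of_le ?_ le_self_add)
      rw [ENNReal.mul_rpow_of_nonneg _ _ hp0.le,
        ENNReal.ofReal_rpow_of_nonneg (abs_nonneg z) hp0.le]
  refine (lintegral_mono hpt).trans_eq ?_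
  rw [lintegral_add_right _ (measurable_one.indicator hT), lintegral_indicator hS,
    lintegral_indicator_one hT, lintegral_mul_const _ (by fun_prop)]

lemma measure_one_lt_abs_lt_top {ν : Measure ℝ}
    (hν : ∫⁻ z, min (ENNReal.ofReal (z ^ 2)) 1 ∂ν < ⊤) : ν {z | 1 < |z|} < ⊤ := by
  calc ν {z | 1 < |z|} ≤ ν {z | 1 ≤ min (ENNReal.ofReal (z ^ 2)) 1} := by
        refine measure_mono fun z (hz : 1 < |z|) => ?_
        exact le_min (ENNReal.one_le_ofReal.2 ((one_lt_sq_iff_one_lt_abs z).2 hz).le) le_rfl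
    _ = 1 * ν {z | 1 ≤ min (ENNReal.ofReal (z ^ 2)) 1} := (one_mul _).symm
    _ ≤ ∫⁻ z, min (ENNReal.ofReal (z ^ 2)) 1 ∂ν :=
        mul_meas_ge_le_lintegral₀ (by fun_prop) 1
    _ < ⊤ := hν

section Riesz

variable {E : Type*} [NormedAddCommGroup E] [NormedSpace ℝ E] [FiniteDimensional ℝ E]
  [MeasurableSpace E] [BorelSpace E] {μ : Measure E} [μ.IsAddHaarMeasure]

lemma integrableOn_ball_norm_sub_rpow_neg {s : ℝ} (hs0 : 0 ≤ s) (hs : s < finrank ℝ E)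
    (x : E) (r : ℝ) : IntegrableOn (fun y => ‖x - y‖ ^ (-s)) (ball x r) μ := by
  have hdim : 1 ≤ finrank ℝ E := by exact_mod_cast hs0.trans_lt hs
  have h0 : IntegrableOn (fun y : E => ‖y‖ ^ (-s)) (ball 0 r) μ :=
    integrableOn_ball_of_norm_le_rpow hdim (C := 1) hs
      (.of_forall fun y => by rw [one_mul, Real.norm_of_nonneg (by positivity)])
      (measurable_norm.pow_const _).aestronglyMeasurable
  rw [← integrable_indicator_iff measurableSet_ball] at h0 ⊢
  have htranslate : (ball x r).indicator (fun y => ‖x - y‖ ^ (-s)) =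
      fun y => (ball 0 r).indicator (fun y => ‖y‖ ^ (-s)) (y - x) := by
    ext y
    simp [indicator, mem_ball, dist_eq_norm, norm_sub_rev x y]
  exact htranslate ▸ h0.comp_sub_right x

lemma setLIntegral_norm_sub_rpow_neg_lt_top {s : ℝ} (hs0 : 0 ≤ s) (hs : s < finrank ℝ E)
    (x : E) {D : Set E} (hD : Bornology.IsBounded D) :
    ∫⁻ y in D, ENNReal.ofReal (‖x - y‖ ^ (-s)) ∂μ < ⊤ := by
  obtain ⟨r, hr⟩ := hD.subset_ball x
  exact (lintegral_mono_set hr).trans_lt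
    (integrableOn_ball_norm_sub_rpow_neg hs0 hs x r).setLIntegral_lt_top

lemma setLIntegral_rpow_lt_top_of_le_norm_sub_rpow_neg {g : E → ℝ≥0∞} {D : Set E}
    (hD : Bornology.IsBounded D) {x : E} {C α p : ℝ} (hC : 0 ≤ C) (hα : 0 ≤ α) (hp : 0 < p)
    (hαp : α * p < finrank ℝ E)
    (hg : ∀ y ∈ D, x ≠ y → g y ≤ ENNReal.ofReal (C * ‖x - y‖ ^ (-α))) :
    ∫⁻ y in D, g y ^ p ∂μ < ⊤ := by
  have : Nontrivial E := Module.nontrivial_of_finrank_pos (R := ℝ) <| by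
    exact_mod_cast (by positivity : 0 ≤ α * p).trans_lt hαp
  have hne : ∀ᵐ y ∂μ, x ≠ y := by
    filter_upwards [compl_mem_ae_iff.2 (measure_singleton x)] with y hy using Ne.symm hy
  have hpt : ∀ᵐ y ∂μ, y ∈ D →
      g y ^ p ≤ ENNReal.ofReal (C ^ p) * ENNReal.ofReal (‖x - y‖ ^ (-(α * p))) := by
    filter_upwards [hne] with y hxy hy
    have hxy' : 0 < ‖x - y‖ := norm_pos_iff.2 (sub_ne_zero.2 hxy)
    calc g y ^ p ≤ ENNReal.ofReal (C * ‖x - y‖ ^ (-α)) ^ p :=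
          ENNReal.rpow_le_rpow (hg y hy hxy) hp.le
      _ = _ := by
        rw [ENNReal.ofReal_rpow_of_nonneg (by positivity) hp.le, Real.mul_rpow hC (by positivity),
          ← Real.rpow_mul hxy'.le, ENNReal.ofReal_mul (by positivity), neg_mul]
  refine (setLIntegral_mono_ae (by fun_prop) hpt).trans_lt ?_
  rw [lintegral_const_mul' _ _ ofReal_ne_top]
  exact mul_lt_top ofReal_lt_top (setLIntegral_norm_sub_rpow_neg_lt_top (by positivity) hαp x hD)

end Riesz

theorem stmt_3_general
    (d : ℕ) (hd : 4 ≤ d)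
    (D : Set (EuclideanSpace ℝ (Fin d)))
    (hDb : Bornology.IsBounded D)
    (C : ℝ) (hC : 0 < C)
    (G : EuclideanSpace ℝ (Fin d) → EuclideanSpace ℝ (Fin d) → ℝ≥0∞)
    (hGb : ∀ x ∈ D, ∀ y ∈ D, x ≠ y →
      G x y ≤ ENNReal.ofReal (C * ‖x - y‖ ^ ((2 : ℝ) - d)))
    (ν : Measure ℝ)
    (hν : ∫⁻ z, min (ENNReal.ofReal (z ^ 2)) 1 ∂ν < ⊤)
    (p : ℝ) (hp0 : 0 < p) (hpd : p < d / ((d : ℝ) - 2))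
    (hνp : ∫⁻ z in {z : ℝ | 0 < |z| ∧ |z| ≤ 1}, ENNReal.ofReal (|z| ^ p) ∂ν < ⊤) :
    ∀ x ∈ D,
      ∫⁻ y in D, ∫⁻ z, min ((ENNReal.ofReal |z| * G x y) ^ 2) 1 ∂ν ∂volume < ⊤ := by
  intro x hx
  have hd4 : (4 : ℝ) ≤ d := by exact_mod_cast hd
  have hd2 : (0 : ℝ) < d - 2 := by linarith
  have hp2 : p ≤ 2 := hpd.le.trans ((div_le_iff₀ hd2).2 (by linarith))
  have hGp : ∫⁻ y in D, G x y ^ p < ⊤ := by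
    refine setLIntegral_rpow_lt_top_of_le_norm_sub_rpow_neg (x := x) (α := d - 2) hDb hC.le
      hd2.le hp0 ?_ fun y hy hxy => ?_
    · rw [finrank_euclideanSpace_fin]
      exact (lt_div_iff₀' hd2).1 hpd
    · simpa only [neg_sub] using hGb x hx y hy hxy
  set K := ∫⁻ z in {z : ℝ | 0 < |z| ∧ |z| ≤ 1}, ENNReal.ofReal (|z| ^ p) ∂ν
  calc ∫⁻ y in D, ∫⁻ z, min ((ENNReal.ofReal |z| * G x y) ^ 2) 1 ∂ν
      ≤ ∫⁻ y in D, K * G x y ^ p + ν {z | 1 < |z|} :=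
        lintegral_mono fun y => lintegral_min_mul_sq_one_le ν hp0 hp2 (G x y)
    _ = K * (∫⁻ y in D, G x y ^ p) + ν {z | 1 < |z|} * volume D := by
        rw [lintegral_add_right _ measurable_const, lintegral_const_mul' _ _ hνp.ne,
          setLIntegral_const]
    _ < ⊤ := add_lt_top.2
        ⟨mul_lt_top hνp hGp, mul_lt_top (measure_one_lt_abs_lt_top hν) hDb.measure_lt_top⟩

/-- For `d ≥ 4`, a bounded measurable `D ⊆ ℝ^d`, a kernel `G` dominated by
`C‖x-y‖^{2-d}` off the diagonal, and a Lévy measure `ν` on `ℝ` with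
`∫_{0<|z|≤1}|z|^p ν(dz) < ∞` for some `p ∈ (0, d/(d-2))`, the Rajput–Rosinski criterion
`∫_D ∫_ℝ (|z G(x,y)|² ∧ 1) ν(dz) dy < ∞` holds for every `x ∈ D`. -/
theorem stmt_3
    (d : ℕ) (hd : 4 ≤ d)
    (D : Set (EuclideanSpace ℝ (Fin d)))
    (hDm : MeasurableSet D) (hDb : Bornology.IsBounded D)
    (C : ℝ) (hC : 0 < C)
    (G : EuclideanSpace ℝ (Fin d) → EuclideanSpace ℝ (Fin d) → ℝ≥0∞)
    (hGm : Measurable (Function.uncurry G))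
    (hGb : ∀ x ∈ D, ∀ y ∈ D, x ≠ y →
      G x y ≤ ENNReal.ofReal (C * ‖x - y‖ ^ ((2 : ℝ) - d)))
    (ν : Measure ℝ) (hν0 : ν {0} = 0)
    (hν : ∫⁻ z, min (ENNReal.ofReal (z ^ 2)) 1 ∂ν < ⊤)
    (p : ℝ) (hp0 : 0 < p) (hpd : p < d / ((d : ℝ) - 2))
    (hνp : ∫⁻ z in {z : ℝ | 0 < |z| ∧ |z| ≤ 1}, ENNReal.ofReal (|z| ^ p) ∂ν < ⊤) :
    ∀ x ∈ D,
      ∫⁻ y in D, ∫⁻ z, min ((ENNReal.ofReal |z| * G x y) ^ 2) 1 ∂ν ∂volume < ⊤ :=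
  stmt_3_general d hd D hDb C hC G hGb ν hν p hp0 hpd hνp
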